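/- Multi-step Q-identity: in a deterministic finite-horizon MDP with exploration policy π and Q^1 = Q^π, Q^{j+1} = QVI(Q^j), for all timesteps i, states s, actions a_i and all k ≥ 1: Q^k_i(s, a_i) = max over (k−1)-length action continuations a_{i+1:i+k−1} of Q^1_i(s, a_i, a_{i+1:i+k−1}), where Q^1_i(s, a_{i:i+k−1}) denotes the expected return from s at time i taking the fixed action sequence a_{i:i+k−1} and then following π. -/

import Mathlib

open Finset Classical

/-- Value function of a (time-indexed, stochastic) policy by fuel recursion:
`polV A f R pi t n s` is the expected sum of the next `n` rewards from state `s`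
at timestep `t` following `pi`. -/
noncomputable def polV {S : Type*} (A : ℕ) (f : S → Fin A → S) (R : S → Fin A → ℝ)
    (pi : ℕ → S → Fin A → ℝ) : ℕ → ℕ → S → ℝ
  | _, 0, _ => 0
  | t, n + 1, s => ∑ a : Fin A, pi t s a * (R s a + polV A f R pi (t + 1) n (f s a))

/-- Action-sequence Q-function: `seqQ A T f R pi t s as` is the expected return from state `s`
at timestep `t`, taking the fixed action sequence `as` and then following `pi` until the
horizon `T`. -/
noncomputable def seqQ {S : Type*} (A T : ℕ) (f : S → Fin A → S) (R : S → Fin A → ℝ)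
    (pi : ℕ → S → Fin A → ℝ) : ℕ → S → List (Fin A) → ℝ
  | t, s, [] => polV A f R pi t (T + 1 - t) s
  | t, s, a :: rest => R s a + seqQ A T f R pi (t + 1) (f s a) rest

/-- Q-value-iteration iterates: `qIter ... Q1 0 = Q1`, `qIter ... Q1 (j+1) = QVI (qIter ... Q1 j)`,
where `QVI(Q)_t(s,a) = R(s,a) + max_{a'} Q_{t+1}(f(s,a), a')` (and `Q_{T+1} ≡ 0`). -/
noncomputable def qIter {S : Type*} (A T : ℕ) (f : S → Fin A → S) (R : S → Fin A → ℝ)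
    (Q1 : ℕ → S → Fin A → ℝ) : ℕ → ℕ → S → Fin A → ℝ
  | 0 => Q1
  | j + 1 => fun t s a =>
      R s a + if t < T then ⨆ a' : Fin A, qIter A T f R Q1 j (t + 1) (f s a) a' else 0
/-! The QVI step unrolls as `Q^{m+1}_t(s, a) = R(s, a) + max_b Q^m_{t+1}(f s a, b)`. Inductively
`Q^m_{t+1}(f s a, b)` is the best return of an action sequence starting with `b`, and because the
dynamics are deterministic, `R(s, a)` plus the return of `b :: rest` from `f s a` is the return of
`a :: b :: rest` from `s`. The constant `R(s, a)` passes through the finite max, and a max over `b`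
of a max over `rest` is a max over `b :: rest`. -/

theorem Finite.ciSup_pi_fin_succ {α β : Type*} [ConditionallyCompleteLattice α] [Finite β]
    {m : ℕ} (F : (Fin (m + 1) → β) → α) :
    ⨆ g, F g = ⨆ b, ⨆ g : Fin m → β, F (Fin.cons b g) := by
  rw [← (Fin.consEquiv fun _ => β).iSup_comp, Finite.ciSup_prod]
  rfl

theorem qIter_succ_of_lt {S : Type*} {A T : ℕ} (f : S → Fin A → S) (R : S → Fin A → ℝ)
    (Q : ℕ → S → Fin A → ℝ) {j t : ℕ} (ht : t < T) (s : S) (a : Fin A) :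
    qIter A T f R Q (j + 1) t s a = R s a + ⨆ b, qIter A T f R Q j (t + 1) (f s a) b := by
  simp only [qIter, if_pos ht]

theorem seqQ_cons_ofFn_cons {S : Type*} {A T : ℕ} (f : S → Fin A → S) (R : S → Fin A → ℝ)
    (pi : ℕ → S → Fin A → ℝ) {m : ℕ} (t : ℕ) (s : S) (a b : Fin A) (g : Fin m → Fin A) :
    seqQ A T f R pi t s (a :: List.ofFn (Fin.cons b g)) =
      R s a + seqQ A T f R pi (t + 1) (f s a) (b :: List.ofFn g) := by
  rw [List.ofFn_succ]
  simp [seqQ]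

/-- The horizon condition cannot be dropped: past `T` the iterates stop adding rewards
(`Q_{T+1} ≡ 0`), while `seqQ` still collects the reward of every fixed action. -/
theorem qIter_seqQ_eq_ciSup {S : Type*} {A T : ℕ} (f : S → Fin A → S) (R : S → Fin A → ℝ)
    (pi : ℕ → S → Fin A → ℝ) {m t : ℕ} (h : t + m ≤ T) (s : S) (a : Fin A) :
    qIter A T f R (fun t' s' a' => seqQ A T f R pi t' s' [a']) m t s a
      = ⨆ rest : Fin m → Fin A, seqQ A T f R pi t s (a :: List.ofFn rest) := by
  induction m generalizing t s a with
  | zero => simp [qIter]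
  | succ m ih =>
    have : Nonempty (Fin A) := ⟨a⟩
    calc _ = R s a + ⨆ b, ⨆ g : Fin m → Fin A,
              seqQ A T f R pi (t + 1) (f s a) (b :: List.ofFn g) := by
            simp only [qIter_succ_of_lt f R _ (by omega : t < T), ih (by omega : t + 1 + m ≤ T)]
      _ = ⨆ b, ⨆ g : Fin m → Fin A,
              R s a + seqQ A T f R pi (t + 1) (f s a) (b :: List.ofFn g) := by
            simp only [add_ciSup (Finite.bddAbove_range _)]
      _ = _ := by simp only [Finite.ciSup_pi_fin_succ, seqQ_cons_ofFn_cons]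

theorem multi_step_Q_identity_general
    {S : Type*} (A T : ℕ)
    (f : S → Fin A → S) (R : S → Fin A → ℝ)
    (pi : ℕ → S → Fin A → ℝ)
    (k t : ℕ) (hk : 1 ≤ k) (htk : t + k ≤ T + 1)
    (s : S) (a : Fin A) :
    qIter A T f R (fun t' s' a' => seqQ A T f R pi t' s' [a']) (k - 1) t s a
      = ⨆ rest : Fin (k - 1) → Fin A,
          seqQ A T f R pi t s (a :: List.ofFn rest) :=
  qIter_seqQ_eq_ciSup f R pi (m := k - 1) (by omega) s a

/--
Multi-step Q-identity.  In a deterministic finite-horizon MDP with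
exploration policy `pi` (a probability distribution over actions at every state and time),
let `Q^1 = Q^pi` and `Q^{j+1} = QVI(Q^j)`.  Then for all `k ≥ 1`, timesteps `1 ≤ t` with
`t + k − 1 ≤ T`, states `s` and actions `a`,
`Q^k_t(s, a) = max over (k−1)-length continuations rest of Q^1_t(s, a :: rest)`,
where `Q^1_t(s, as)` denotes the expected return from `s` at time `t` taking the fixed
action sequence `as` and then following `pi`.
-/
theorem multi_step_Q_identity
    {S : Type*} (A T : ℕ) (hApos : 0 < A)
    (f : S → Fin A → S) (R : S → Fin A → ℝ)
    (pi : ℕ → S → Fin A → ℝ)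
    (hprob : ∀ t s, ∑ a : Fin A, pi t s a = 1)
    (hnn : ∀ t s a, 0 ≤ pi t s a)
    (k t : ℕ) (hk : 1 ≤ k) (ht : 1 ≤ t) (htk : t + k ≤ T + 1)
    (s : S) (a : Fin A) :
    qIter A T f R (fun t' s' a' => seqQ A T f R pi t' s' [a']) (k - 1) t s a
      = ⨆ rest : Fin (k - 1) → Fin A,
          seqQ A T f R pi t s (a :: List.ofFn rest) :=
  multi_step_Q_identity_general A T f R pi k t hk htk s a
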